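/- Consider the gradient-push algorithm where each f_i has L-Lipschitz gradient and f := (1/n) Σ_{i=1}^n f_i is β-strongly convex with minimizer w_*. Set γ := βL/(L+β), A_t := ‖w̄(t) − w_*‖ and B_t := ‖w(t) − nπ⊗w̄(t)‖_{π⊗1_d}. If 0 < α ≤ 2/(L+β), then for all t ≥ 0, A_{t+1} ≤ (1 − γα + (αLδ/n)‖1_n − nπ‖_π σ_W^t) A_t + (αLδ/n) B_t + (αLδ/n)‖1_n − nπ‖_π σ_W^t ‖w_*‖. -/

import Mathlib

open Finset

/-- π-weighted norm on ℝ^n: ‖x‖_π = (Σ_j x_j²/π_j)^{1/2}. -/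
noncomputable def wnorm {n : ℕ} (p : Fin n → ℝ) (x : Fin n → ℝ) : ℝ :=
  Real.sqrt (∑ j, x j ^ 2 / p j)

/-- Matrix operator norm induced by the π-weighted norm. -/
noncomputable def matNorm {n : ℕ} (p : Fin n → ℝ) (A : Matrix (Fin n) (Fin n) ℝ) : ℝ :=
  ⨆ x : {x : Fin n → ℝ // x ≠ 0}, wnorm p (A.mulVec x.1) / wnorm p x.1

/-- Block weighted norm on (ℝ^d)^n: ‖x‖_{π⊗1_d} = (Σ_j ‖x_j‖²/π_j)^{1/2}. -/
noncomputable def bnorm {n d : ℕ} (p : Fin n → ℝ)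
    (x : Fin n → EuclideanSpace ℝ (Fin d)) : ℝ :=
  Real.sqrt (∑ j, ‖x j‖ ^ 2 / p j)

/-- Blockwise action of the Kronecker product A ⊗ I_d on (ℝ^d)^n. -/
noncomputable def kron {n d : ℕ} (A : Matrix (Fin n) (Fin n) ℝ)
    (x : Fin n → EuclideanSpace ℝ (Fin d)) : Fin n → EuclideanSpace ℝ (Fin d) :=
  fun i => ∑ j, A i j • x j

/-- Operator norm of A ⊗ I_d induced by ‖·‖_{π⊗1_d}. -/
noncomputable def bopNorm {n : ℕ} (d : ℕ) (p : Fin n → ℝ)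
    (A : Matrix (Fin n) (Fin n) ℝ) : ℝ :=
  ⨆ x : {x : Fin n → EuclideanSpace ℝ (Fin d) // x ≠ 0},
    bnorm p (kron A x.1) / bnorm p x.1

/-- Euclidean norm on (ℝ^d)^n. -/
noncomputable def enormB {n d : ℕ} (x : Fin n → EuclideanSpace ℝ (Fin d)) : ℝ :=
  Real.sqrt (∑ j, ‖x j‖ ^ 2)


open RealInnerProductSpace

variable {E : Type*} [NormedAddCommGroup E] [InnerProductSpace ℝ E] [CompleteSpace E]

lemma line_hasDerivAt {h : E → ℝ} {H : E → E}
    (hgrad : ∀ z, HasGradientAt h (H z) z) (x v : E) (s : ℝ) :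
    HasDerivAt (fun s : ℝ => h (x + s • v)) ⟪H (x + s • v), v⟫ s := by
  have hline : HasDerivAt (fun s : ℝ => x + s • v) v s := by
    simpa using ((hasDerivAt_id s).smul_const v).const_add x
  have := ((hgrad (x + s • v)).hasFDerivAt).comp_hasDerivAt s hline
  simpa [InnerProductSpace.toDual_apply_apply, Function.comp_def] using this

lemma grad_ineq {h : E → ℝ} {H : E → E} (hconv : ConvexOn ℝ Set.univ h)
    (hgrad : ∀ z, HasGradientAt h (H z) z) (x y : E) :
    h x + ⟪H x, y - x⟫ ≤ h y := by
  have hg : ConvexOn ℝ Set.univ (fun s : ℝ => h (x + s • (y - x))) := by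
    have haff : ConvexOn ℝ ((fun s : ℝ => x + s • (y - x)) ⁻¹' Set.univ)
        (h ∘ fun s : ℝ => x + s • (y - x)) := by
      have : (fun s : ℝ => x + s • (y - x)) =
          (AffineMap.lineMap x y : ℝ →ᵃ[ℝ] E) := by
        funext s; simp [AffineMap.lineMap_apply]; abel
      rw [this]
      exact hconv.comp_affineMap _
    simpa [Function.comp_def] using haff
  have hslope := hg.le_slope_of_hasDerivAt (Set.mem_univ (0:ℝ)) (Set.mem_univ (1:ℝ))
    one_pos (line_hasDerivAt hgrad x (y - x) 0)
  have hxy : x + (1:ℝ) • (y - x) = y := by rw [one_smul]; abel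
  have hx0 : x + (0:ℝ) • (y - x) = x := by simp
  rw [slope_def_field, hx0, hxy] at hslope
  simp only [sub_zero, div_one] at hslope
  linarith [hslope]

lemma descent_lemma {F : E → ℝ} {G : E → E} {L : ℝ}
    (hgrad : ∀ z, HasGradientAt F (G z) z)
    (hlip : ∀ a b, ‖G a - G b‖ ≤ L * ‖a - b‖) (x y : E) :
    F y ≤ F x + ⟪G x, y - x⟫ + L / 2 * ‖y - x‖ ^ 2 := by
  set v := y - x with hv
  have hGcont : Continuous G := by
    have h : LipschitzWith (Real.toNNReal L) G := by
      apply LipschitzWith.of_dist_le_mul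
      intro a b
      rw [dist_eq_norm, dist_eq_norm]
      calc ‖G a - G b‖ ≤ L * ‖a - b‖ := hlip a b
        _ ≤ Real.toNNReal L * ‖a - b‖ := by
            gcongr; exact (Real.le_coe_toNNReal L)
    exact h.continuous
  have hφ : ∀ s : ℝ, HasDerivAt (fun s : ℝ => F (x + s • v)) ⟪G (x + s • v), v⟫ s :=
    fun s => line_hasDerivAt hgrad x v s
  have hcont : Continuous fun s : ℝ => ⟪G (x + s • v), v⟫ := by
    apply Continuous.inner
    · exact hGcont.comp (by continuity)
    · exact continuous_const
  have hint : IntervalIntegrable (fun s : ℝ => ⟪G (x + s • v), v⟫)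
      MeasureTheory.volume 0 1 := hcont.intervalIntegrable 0 1
  have hint2 : IntervalIntegrable (fun s : ℝ => ⟪G x, v⟫ + L * ‖v‖ ^ 2 * s)
      MeasureTheory.volume 0 1 := by
    apply Continuous.intervalIntegrable; continuity
  have hFTC : F (x + (1:ℝ) • v) - F (x + (0:ℝ) • v)
      = ∫ s in (0:ℝ)..1, ⟪G (x + s • v), v⟫ :=
    (intervalIntegral.integral_eq_sub_of_hasDerivAt (fun s _ => hφ s) hint).symm
  have hmono : (∫ s in (0:ℝ)..1, ⟪G (x + s • v), v⟫)
      ≤ ∫ s in (0:ℝ)..1, (⟪G x, v⟫ + L * ‖v‖ ^ 2 * s) := by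
    apply intervalIntegral.integral_mono_on zero_le_one hint hint2
    intro s hs
    have h1 : ⟪G (x + s • v) - G x, v⟫ ≤ ‖G (x + s • v) - G x‖ * ‖v‖ :=
      real_inner_le_norm _ _
    have h2 : ‖G (x + s • v) - G x‖ ≤ L * (s * ‖v‖) := by
      have h := hlip (x + s • v) x
      have : x + s • v - x = s • v := by abel
      rw [this, norm_smul, Real.norm_eq_abs, abs_of_nonneg hs.1] at h
      linarith [h]
    have h3 : ⟪G (x + s • v), v⟫ = ⟪G x, v⟫ + ⟪G (x + s • v) - G x, v⟫ := by
      rw [inner_sub_left]; ring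
    nlinarith [norm_nonneg v, norm_nonneg (G (x + s • v) - G x), hs.1]
  have hval : (∫ s in (0:ℝ)..1, (⟪G x, v⟫ + L * ‖v‖ ^ 2 * s))
      = ⟪G x, v⟫ + L / 2 * ‖v‖ ^ 2 := by
    rw [intervalIntegral.integral_add (by apply Continuous.intervalIntegrable; continuity)
      (by apply Continuous.intervalIntegrable; continuity)]
    rw [intervalIntegral.integral_const, intervalIntegral.integral_const_mul,
      integral_id]
    simp; ring
  have h0 : x + (0:ℝ) • v = x := by simp
  have h1 : x + (1:ℝ) • v = y := by rw [one_smul, hv]; abel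
  rw [h0, h1] at hFTC
  linarith [hFTC, hmono, hval.le, hval.ge]

lemma gradient_normsq (c : ℝ) (x : E) :
    HasGradientAt (fun z : E => c / 2 * ‖z‖ ^ 2) (c • x) x := by
  have h1 : HasFDerivAt (fun z : E => (⟪z, z⟫ : ℝ))
      ((fderivInnerCLM ℝ (x, x)).comp ((ContinuousLinearMap.id ℝ E).prod
        (ContinuousLinearMap.id ℝ E))) x :=
    (hasFDerivAt_id x).inner ℝ (hasFDerivAt_id x)
  have h2 : HasFDerivAt (fun z : E => c / 2 * (⟪z, z⟫ : ℝ))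
      ((c / 2) • ((fderivInnerCLM ℝ (x, x)).comp ((ContinuousLinearMap.id ℝ E).prod
        (ContinuousLinearMap.id ℝ E)))) x := h1.const_mul (c / 2)
  have heq : (fun z : E => c / 2 * (⟪z, z⟫ : ℝ)) = fun z : E => c / 2 * ‖z‖ ^ 2 := by
    funext z; rw [real_inner_self_eq_norm_sq]
  rw [heq] at h2
  rw [hasGradientAt_iff_hasFDerivAt]
  refine h2.congr_fderiv (Eq.symm ?_)
  ext v
  simp [InnerProductSpace.toDual_apply_apply, fderivInnerCLM_apply, real_inner_smul_left,
    real_inner_comm]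
  ring

lemma hasGradientAt_sub_normsq {F : E → ℝ} {G : E → E} (β : ℝ)
    (hgrad : ∀ z, HasGradientAt F (G z) z) (z : E) :
    HasGradientAt (fun z : E => F z - β / 2 * ‖z‖ ^ 2) (G z - β • z) z := by
  have h := (hgrad z).hasFDerivAt.sub (gradient_normsq β z).hasFDerivAt
  rw [hasGradientAt_iff_hasFDerivAt]
  refine h.congr_fderiv (Eq.symm ?_)
  simp [map_sub]

lemma strong_mono {F : E → ℝ} {G : E → E} {β : ℝ}
    (hgrad : ∀ z, HasGradientAt F (G z) z)
    (hconv : ConvexOn ℝ Set.univ (fun z => F z - β / 2 * ‖z‖ ^ 2))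
    (x y : E) : β * ‖x - y‖ ^ 2 ≤ ⟪G x - G y, x - y⟫ := by
  have hHgrad := hasGradientAt_sub_normsq β hgrad
  have h1 := grad_ineq hconv hHgrad x y
  have h2 := grad_ineq hconv hHgrad y x
  have e1 : ⟪G x - β • x, y - x⟫ = -⟪G x - β • x, x - y⟫ := by
    rw [← inner_neg_right]; congr 1; abel
  have e2 : ⟪G x - β • x, x - y⟫ - ⟪G y - β • y, x - y⟫
      = ⟪G x - G y, x - y⟫ - β * ‖x - y‖ ^ 2 := by
    rw [← inner_sub_left]
    have : G x - β • x - (G y - β • y) = (G x - G y) - β • (x - y) := by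
      rw [smul_sub]; abel
    rw [this, inner_sub_left, real_inner_smul_left, real_inner_self_eq_norm_sq]
  linarith [h1, h2, e1, e2]

lemma nesterov_coercive {F : E → ℝ} {G : E → E} {L β : ℝ} (hβ : 0 < β) (hβL : β ≤ L)
    (hgrad : ∀ z, HasGradientAt F (G z) z)
    (hlip : ∀ a b, ‖G a - G b‖ ≤ L * ‖a - b‖)
    (hconv : ConvexOn ℝ Set.univ (fun z => F z - β / 2 * ‖z‖ ^ 2))
    (x y : E) :
    β * L / (L + β) * ‖x - y‖ ^ 2 + 1 / (L + β) * ‖G x - G y‖ ^ 2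
      ≤ ⟪G x - G y, x - y⟫ := by
  have hL : (0:ℝ) < L := lt_of_lt_of_le hβ hβL
  have hLβ : (0:ℝ) < L + β := by linarith
  -- reduce to the multiplied-out form
  have hred : β * L * ‖x - y‖ ^ 2 + ‖G x - G y‖ ^ 2 ≤ (L + β) * ⟪G x - G y, x - y⟫ →
      β * L / (L + β) * ‖x - y‖ ^ 2 + 1 / (L + β) * ‖G x - G y‖ ^ 2
        ≤ ⟪G x - G y, x - y⟫ := by
    intro hmain
    rw [div_mul_eq_mul_div, div_mul_eq_mul_div, ← add_div, div_le_iff₀ hLβ]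
    calc β * L * ‖x - y‖ ^ 2 + 1 * ‖G x - G y‖ ^ 2
        = β * L * ‖x - y‖ ^ 2 + ‖G x - G y‖ ^ 2 := by ring
      _ ≤ (L + β) * ⟪G x - G y, x - y⟫ := hmain
      _ = ⟪G x - G y, x - y⟫ * (L + β) := by ring
  apply hred
  have hsm := strong_mono hgrad hconv x y
  rcases eq_or_lt_of_le hβL with heq | hlt
  · -- β = L
    have hn := hlip x y
    have hsq : ‖G x - G y‖ ^ 2 ≤ L ^ 2 * ‖x - y‖ ^ 2 := by
      have := mul_self_le_mul_self (norm_nonneg _) hn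
      nlinarith [norm_nonneg (G x - G y), norm_nonneg (x - y), mul_nonneg hL.le (norm_nonneg (x-y))]
    subst heq
    nlinarith [hsm, hsq]
  · -- β < L
    set M := L - β with hMdef
    have hM : (0:ℝ) < M := by simp [hMdef]; linarith
    set h := fun z : E => F z - β / 2 * ‖z‖ ^ 2 with hh
    set H := fun z : E => G z - β • z with hHdef
    have hHgrad : ∀ z, HasGradientAt h (H z) z := hasGradientAt_sub_normsq β hgrad
    -- descent lemma for h with constant M
    have hdesc : ∀ a b : E, h b ≤ h a + ⟪H a, b - a⟫ + M / 2 * ‖b - a‖ ^ 2 := by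
      intro a b
      have hd := descent_lemma hgrad hlip a b
      have hexp : ‖b‖ ^ 2 = ‖a‖ ^ 2 + 2 * ⟪a, b - a⟫ + ‖b - a‖ ^ 2 := by
        have hab : a + (b - a) = b := by abel
        have := norm_add_sq_real a (b - a)
        rw [hab] at this; exact this
      have hin : ⟪H a, b - a⟫ = ⟪G a, b - a⟫ - β * ⟪a, b - a⟫ := by
        simp only [hHdef, inner_sub_left, real_inner_smul_left]
      simp only [hh]
      rw [hin]
      have : M / 2 * ‖b - a‖ ^ 2 = L / 2 * ‖b - a‖ ^ 2 - β / 2 * ‖b - a‖ ^ 2 := by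
        rw [hMdef]; ring
      have hexp2 : β / 2 * ‖b‖ ^ 2
          = β / 2 * ‖a‖ ^ 2 + β * ⟪a, b - a⟫ + β / 2 * ‖b - a‖ ^ 2 := by
        linear_combination (β / 2) * hexp
      linarith [hd, hexp2]
    -- key inequality
    have key : ∀ a b : E, 1 / (2 * M) * ‖H a - H b‖ ^ 2 ≤ h a - h b - ⟪H b, a - b⟫ := by
      intro a b
      set u := H a - H b with hu
      set z := a - (1 / M) • u with hzdef
      have hza : z - a = -((1 / M) • u) := by rw [hzdef]; abel
      have hzb : z - b = (a - b) - (1 / M) • u := by rw [hzdef]; abel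
      have e1 : ⟪H a, z - a⟫ = -(1 / M * ⟪H a, u⟫) := by
        rw [hza, inner_neg_right, real_inner_smul_right]
      have e2 : ‖z - a‖ ^ 2 = (1 / M) ^ 2 * ‖u‖ ^ 2 := by
        rw [hza, norm_neg, norm_smul, Real.norm_eq_abs, mul_pow, sq_abs]
      have e3 : ⟪H b, z - b⟫ = ⟪H b, a - b⟫ - 1 / M * ⟪H b, u⟫ := by
        rw [hzb, inner_sub_right, real_inner_smul_right]
      have e4 : 1 / M * ⟪H a, u⟫ - 1 / M * ⟪H b, u⟫ = 1 / M * ‖u‖ ^ 2 := by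
        rw [← mul_sub, ← inner_sub_left, ← hu, real_inner_self_eq_norm_sq]
      have hd := hdesc a z
      have hc := grad_ineq hconv hHgrad b z
      rw [e1, e2] at hd
      rw [e3] at hc
      have hfs : M / 2 * ((1 / M) ^ 2 * ‖u‖ ^ 2) = 1 / (2 * M) * ‖u‖ ^ 2 := by
        field_simp
      have e6 : 1 / M * ‖u‖ ^ 2 = 2 * (1 / (2 * M) * ‖u‖ ^ 2) := by
        field_simp
      linarith [hd, hc, e4, hfs, e6]
    -- cocoercivity
    have coco : 1 / M * ‖H x - H y‖ ^ 2 ≤ ⟪H x - H y, x - y⟫ := by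
      have k1 := key x y
      have k2 := key y x
      have e7 : ‖H y - H x‖ = ‖H x - H y‖ := norm_sub_rev _ _
      have e8 : ⟪H x, y - x⟫ = -⟪H x, x - y⟫ := by
        rw [← inner_neg_right]; congr 1; abel
      have e9 : ⟪H x, x - y⟫ - ⟪H y, x - y⟫ = ⟪H x - H y, x - y⟫ := by
        rw [← inner_sub_left]
      have e10 : 1 / M * ‖H x - H y‖ ^ 2 = 2 * (1 / (2 * M) * ‖H x - H y‖ ^ 2) := by
        field_simp
      rw [e7] at k2
      linarith [k1, k2, e8, e9, e10]
    -- expand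
    have hHxy : H x - H y = (G x - G y) - β • (x - y) := by
      simp only [hHdef, smul_sub]; abel
    have EH2 : ‖H x - H y‖ ^ 2
        = ‖G x - G y‖ ^ 2 - 2 * β * ⟪G x - G y, x - y⟫ + β ^ 2 * ‖x - y‖ ^ 2 := by
      rw [hHxy, norm_sub_sq_real, real_inner_smul_right, norm_smul, Real.norm_eq_abs,
        mul_pow, sq_abs]
      ring
    have EHin : ⟪H x - H y, x - y⟫ = ⟪G x - G y, x - y⟫ - β * ‖x - y‖ ^ 2 := by
      rw [hHxy, inner_sub_left, real_inner_smul_left, real_inner_self_eq_norm_sq]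
    rw [EH2, EHin] at coco
    -- multiply out: 1/M * A ≤ B with M > 0 gives A ≤ M * B
    rw [one_div, inv_mul_le_iff₀ hM] at coco
    have : M = L - β := hMdef
    nlinarith [coco]

lemma contraction_step {F : E → ℝ} {G : E → E} {L β α : ℝ} (hβ : 0 < β) (hβL : β ≤ L)
    (hα : 0 < α) (hα2 : α ≤ 2 / (L + β))
    (hgrad : ∀ z, HasGradientAt F (G z) z)
    (hlip : ∀ a b, ‖G a - G b‖ ≤ L * ‖a - b‖)
    (hconv : ConvexOn ℝ Set.univ (fun z => F z - β / 2 * ‖z‖ ^ 2))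
    (x y : E) :
    ‖x - α • G x - (y - α • G y)‖ ≤ (1 - β * L / (L + β) * α) * ‖x - y‖ := by
  have hL : (0:ℝ) < L := lt_of_lt_of_le hβ hβL
  have hLβ : (0:ℝ) < L + β := by linarith
  set γ := β * L / (L + β) with hγ
  have hγpos : 0 < γ := by rw [hγ]; positivity
  have hγα : γ * α ≤ 1 / 2 := by
    have h1 : γ * α ≤ γ * (2 / (L + β)) := mul_le_mul_of_nonneg_left hα2 hγpos.le
    have h2 : γ * (2 / (L + β)) = 2 * β * L / (L + β) ^ 2 := by
      rw [hγ]; field_simp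
    have h3 : 2 * β * L / (L + β) ^ 2 ≤ 1 / 2 := by
      rw [div_le_div_iff₀ (by positivity) (by norm_num)]
      nlinarith [sq_nonneg (L - β)]
    linarith
  have hid : x - α • G x - (y - α • G y) = (x - y) - α • (G x - G y) := by
    rw [smul_sub]; abel
  have hsq : ‖(x - y) - α • (G x - G y)‖ ^ 2 ≤ ((1 - γ * α) * ‖x - y‖) ^ 2 := by
    have hN := nesterov_coercive hβ hβL hgrad hlip hconv x y
    have hexp : ‖(x - y) - α • (G x - G y)‖ ^ 2
        = ‖x - y‖ ^ 2 - 2 * α * ⟪G x - G y, x - y⟫ + α ^ 2 * ‖G x - G y‖ ^ 2 := by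
      rw [norm_sub_sq_real, real_inner_smul_right, norm_smul, Real.norm_eq_abs, mul_pow,
        sq_abs, real_inner_comm]
      ring
    have hα3 : α ^ 2 * ‖G x - G y‖ ^ 2 ≤ 2 / (L + β) * α * ‖G x - G y‖ ^ 2 := by
      have h5 : α ^ 2 ≤ 2 / (L + β) * α := by nlinarith
      exact mul_le_mul_of_nonneg_right h5 (sq_nonneg _)
    have hN2 : 2 * α * (γ * ‖x - y‖ ^ 2 + 1 / (L + β) * ‖G x - G y‖ ^ 2)
        ≤ 2 * α * ⟪G x - G y, x - y⟫ :=
      mul_le_mul_of_nonneg_left hN (by positivity)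
    have hfs : 2 * α * (1 / (L + β) * ‖G x - G y‖ ^ 2)
        = 2 / (L + β) * α * ‖G x - G y‖ ^ 2 := by
      field_simp
    nlinarith [hexp, hα3, hN2, hfs, sq_nonneg (γ * α * ‖x - y‖)]
  have hb : 0 ≤ (1 - γ * α) * ‖x - y‖ := by
    apply mul_nonneg _ (norm_nonneg _)
    linarith
  calc ‖x - α • G x - (y - α • G y)‖ = ‖(x - y) - α • (G x - G y)‖ := by rw [hid]
    _ ≤ (1 - γ * α) * ‖x - y‖ := by
        have h6 := Real.sqrt_le_sqrt hsq
        rwa [Real.sqrt_sq (norm_nonneg _), Real.sqrt_sq hb] at h6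

lemma sum_le_sqrt_weighted {n : ℕ} (p : Fin n → ℝ) (hp : ∀ i, 0 < p i)
    (hps : ∑ i, p i = 1) (a : Fin n → ℝ) (ha : ∀ i, 0 ≤ a i) :
    ∑ i, a i ≤ Real.sqrt (∑ i, a i ^ 2 / p i) := by
  have hnn : 0 ≤ ∑ i, a i ^ 2 / p i :=
    Finset.sum_nonneg fun i _ => div_nonneg (sq_nonneg _) (hp i).le
  rw [Real.le_sqrt (Finset.sum_nonneg fun i _ => ha i) hnn]
  have hcs := Finset.sum_mul_sq_le_sq_mul_sq Finset.univ
    (fun i => Real.sqrt (p i)) (fun i => a i / Real.sqrt (p i))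
  have h1 : ∀ i : Fin n, Real.sqrt (p i) * (a i / Real.sqrt (p i)) = a i := by
    intro i
    have : Real.sqrt (p i) ≠ 0 := ne_of_gt (Real.sqrt_pos.2 (hp i))
    field_simp
  have h2 : ∀ i : Fin n, Real.sqrt (p i) ^ 2 = p i := fun i => Real.sq_sqrt (hp i).le
  have h3 : ∀ i : Fin n, (a i / Real.sqrt (p i)) ^ 2 = a i ^ 2 / p i := by
    intro i
    rw [div_pow, h2 i]
  simp only [h1, h2, h3] at hcs
  rw [hps, one_mul] at hcs
  exact hcs

section MatNorm

lemma wnorm_nonneg {n : ℕ} (p x : Fin n → ℝ) : 0 ≤ wnorm p x := Real.sqrt_nonneg _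

lemma wnorm_pos {n : ℕ} {p : Fin n → ℝ} (hp : ∀ i, 0 < p i) {x : Fin n → ℝ}
    (hx : x ≠ 0) : 0 < wnorm p x := by
  rw [wnorm]
  apply Real.sqrt_pos.2
  obtain ⟨j, hj⟩ : ∃ j, x j ≠ 0 := by
    by_contra h; push_neg at h; exact hx (funext h)
  apply Finset.sum_pos' (fun i _ => div_nonneg (sq_nonneg _) (hp i).le)
  refine ⟨j, Finset.mem_univ j, div_pos ?_ (hp j)⟩
  exact lt_of_le_of_ne (sq_nonneg _) (Ne.symm (pow_ne_zero 2 hj))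

lemma matNorm_nonneg {n : ℕ} (p : Fin n → ℝ) (A : Matrix (Fin n) (Fin n) ℝ) :
    0 ≤ matNorm p A :=
  Real.iSup_nonneg fun x => div_nonneg (wnorm_nonneg _ _) (wnorm_nonneg _ _)

lemma wnorm_mulVec_le_aux {n : ℕ} {p : Fin n → ℝ} (hp : ∀ i, 0 < p i)
    (A : Matrix (Fin n) (Fin n) ℝ) (v : Fin n → ℝ) :
    wnorm p (A.mulVec v)
      ≤ Real.sqrt (∑ i, (∑ j, A i j ^ 2 * p j) / p i) * wnorm p v := by
  rw [wnorm, wnorm, ← Real.sqrt_mul (Finset.sum_nonneg fun i _ => div_nonneg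
    (Finset.sum_nonneg fun j _ => mul_nonneg (sq_nonneg _) (hp j).le) (hp i).le :
      0 ≤ ∑ i, (∑ j, A i j ^ 2 * p j) / p i)]
  apply Real.sqrt_le_sqrt
  set S := ∑ j, v j ^ 2 / p j with hS
  have hSnn : 0 ≤ S := Finset.sum_nonneg fun j _ => div_nonneg (sq_nonneg _) (hp j).le
  have hinner : ∀ i, (A.mulVec v i) ^ 2 ≤ (∑ j, A i j ^ 2 * p j) * S := by
    intro i
    have hcs := Finset.sum_mul_sq_le_sq_mul_sq Finset.univ
      (fun j => A i j * Real.sqrt (p j)) (fun j => v j / Real.sqrt (p j))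
    have h1 : ∀ j : Fin n, A i j * Real.sqrt (p j) * (v j / Real.sqrt (p j))
        = A i j * v j := by
      intro j
      have hne : Real.sqrt (p j) ≠ 0 := ne_of_gt (Real.sqrt_pos.2 (hp j))
      field_simp
    have h2 : ∀ j : Fin n, (A i j * Real.sqrt (p j)) ^ 2 = A i j ^ 2 * p j := by
      intro j; rw [mul_pow, Real.sq_sqrt (hp j).le]
    have h3 : ∀ j : Fin n, (v j / Real.sqrt (p j)) ^ 2 = v j ^ 2 / p j := by
      intro j; rw [div_pow, Real.sq_sqrt (hp j).le]
    simp only [h1, h2, h3] at hcs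
    have hmv : A.mulVec v i = ∑ j, A i j * v j := by
      simp [Matrix.mulVec, dotProduct]
    rw [hmv]
    exact hcs
  calc ∑ i, (A.mulVec v i) ^ 2 / p i
      ≤ ∑ i, (∑ j, A i j ^ 2 * p j) * S / p i := by
        apply Finset.sum_le_sum
        intro i _
        exact (div_le_div_iff_of_pos_right (hp i)).2 (hinner i)
    _ = (∑ i, (∑ j, A i j ^ 2 * p j) / p i) * S := by
        rw [Finset.sum_mul]
        exact Finset.sum_congr rfl fun i _ => by ring

lemma wnorm_mulVec_le {n : ℕ} {p : Fin n → ℝ} (hp : ∀ i, 0 < p i)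
    (A : Matrix (Fin n) (Fin n) ℝ) (v : Fin n → ℝ) :
    wnorm p (A.mulVec v) ≤ matNorm p A * wnorm p v := by
  rcases eq_or_ne v 0 with rfl | hv
  · rw [Matrix.mulVec_zero]
    have h0 : wnorm p (0 : Fin n → ℝ) = 0 := by
      simp [wnorm]
    rw [h0, mul_zero]
  · have hBdd : BddAbove (Set.range fun x : {x : Fin n → ℝ // x ≠ 0} =>
        wnorm p (A.mulVec x.1) / wnorm p x.1) := by
      refine ⟨Real.sqrt (∑ i, (∑ j, A i j ^ 2 * p j) / p i), ?_⟩
      rintro r ⟨x, rfl⟩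
      rw [div_le_iff₀ (wnorm_pos hp x.2)]
      exact wnorm_mulVec_le_aux hp A x.1
    have hle := le_ciSup hBdd (⟨v, hv⟩ : {x : Fin n → ℝ // x ≠ 0})
    rw [matNorm]
    rw [div_le_iff₀ (wnorm_pos hp hv)] at hle
    exact hle

end MatNorm
/-- In the gradient-push algorithm with L-Lipschitz gradients and
β-strongly convex total cost f = (1/n)Σ f_i with minimizer w_*, if 0 < α ≤ 2/(L+β)
then A_{t+1} ≤ (1 − γα + (αLδ/n)‖1_n−nπ‖_π σ_W^t) A_t + (αLδ/n) B_t
  + (αLδ/n)‖1_n−nπ‖_π σ_W^t ‖w_*‖, with γ = βL/(L+β). -/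
theorem average_error_recursion {n d : ℕ}
    (W : Matrix (Fin n) (Fin n) ℝ)
    (hWnn : ∀ i j, 0 ≤ W i j) (hWcol : ∀ j, ∑ i, W i j = 1)
    (p : Fin n → ℝ) (hppos : ∀ i, 0 < p i) (hpsum : ∑ i, p i = 1)
    (hWp : W.mulVec p = p)
    (σW : ℝ) (hσW : σW = matNorm p (W - Matrix.of fun i _ => p i))
    (f : Fin n → EuclideanSpace ℝ (Fin d) → ℝ)
    (gf : Fin n → EuclideanSpace ℝ (Fin d) → EuclideanSpace ℝ (Fin d))
    (hgrad : ∀ i x, HasGradientAt (f i) (gf i x) x)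
    (α : ℝ) (hα : 0 < α)
    (w z : ℕ → Fin n → EuclideanSpace ℝ (Fin d))
    (y : ℕ → Fin n → ℝ)
    (hy0 : y 0 = fun _ => 1) (hz0 : z 0 = w 0)
    (hyrec : ∀ t, y (t + 1) = W.mulVec (y t))
    (hwrec : ∀ t, w (t + 1) = kron W (fun i => w t i - α • gf i (z t i)))
    (hzrec : ∀ t i, z (t + 1) i = (y (t + 1) i)⁻¹ • w (t + 1) i)
    (hypos : ∀ t i, 0 < y t i)
    (δ : ℝ) (hδ : IsLUB (Set.range fun q : ℕ × Fin n => (y q.1 q.2)⁻¹) δ)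
    (wbar : ℕ → EuclideanSpace ℝ (Fin d))
    (hwbar : ∀ t, wbar t = (n : ℝ)⁻¹ • ∑ i, w t i)
    (L β : ℝ) (hL : 0 < L) (hβ : 0 < β)
    (hlip : ∀ i x x', ‖gf i x - gf i x'‖ ≤ L * ‖x - x'‖)
    (hsc : ConvexOn ℝ Set.univ
      (fun x : EuclideanSpace ℝ (Fin d) =>
        (n : ℝ)⁻¹ * ∑ i, f i x - β / 2 * ‖x‖ ^ 2))
    (wstar : EuclideanSpace ℝ (Fin d))
    (hmin : ∀ x, (n : ℝ)⁻¹ * ∑ i, f i wstar ≤ (n : ℝ)⁻¹ * ∑ i, f i x)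
    (hα2 : α ≤ 2 / (L + β))
    (A B : ℕ → ℝ)
    (hA : ∀ t, A t = ‖wbar t - wstar‖)
    (hB : ∀ t, B t = bnorm p (fun i => w t i - ((n : ℝ) * p i) • wbar t))
    (t : ℕ) :
    A (t + 1)
      ≤ (1 - (β * L / (L + β)) * α
          + α * L * δ / n * wnorm p (fun i => 1 - (n : ℝ) * p i) * σW ^ t) * A t
        + α * L * δ / n * B t
        + α * L * δ / n * wnorm p (fun i => 1 - (n : ℝ) * p i) * σW ^ t * ‖wstar‖  := by
  classical
  -- n is positive
  have hn0 : n ≠ 0 := by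
    rintro rfl
    rw [Finset.univ_eq_empty, Finset.sum_empty] at hpsum
    norm_num at hpsum
  have hnpos : (0:ℝ) < n := by
    have := Nat.pos_of_ne_zero hn0
    exact_mod_cast this
  set Cw := wnorm p (fun i => 1 - (n : ℝ) * p i) with hCw
  have hCwnn : 0 ≤ Cw := wnorm_nonneg _ _
  -- trivial case d = 0
  rcases Nat.eq_zero_or_pos d with hd | hd
  · subst hd
    have hnorm0 : ∀ v : EuclideanSpace ℝ (Fin 0), ‖v‖ = 0 := by
      intro v
      rw [EuclideanSpace.norm_eq]
      simp
    have hA1 : A (t + 1) = 0 := by rw [hA, hnorm0]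
    have hA0 : A t = 0 := by rw [hA, hnorm0]
    have hB0 : B t = 0 := by
      rw [hB, bnorm]
      simp [hnorm0]
    have hws : ‖wstar‖ = 0 := hnorm0 _
    rw [hA1, hA0, hB0, hws]
    simp
  -- main case
  set G : EuclideanSpace ℝ (Fin d) → EuclideanSpace ℝ (Fin d) :=
    fun x => (n:ℝ)⁻¹ • ∑ i, gf i x with hGdef
  -- gradient of the average function
  have hGgrad : ∀ x : EuclideanSpace ℝ (Fin d), HasGradientAt (fun z => (n:ℝ)⁻¹ * ∑ i, f i z) (G x) x := by
    intro x
    have hsum : HasFDerivAt (fun z : EuclideanSpace ℝ (Fin d) => ∑ i, f i z)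
        (∑ i, InnerProductSpace.toDual ℝ (EuclideanSpace ℝ (Fin d)) (gf i x)) x := by
      have hterm := HasFDerivAt.fun_sum
        (fun i (_ : i ∈ Finset.univ) => (hgrad i x).hasFDerivAt)
      simpa using hterm
    have hmul := hsum.const_mul ((n:ℝ)⁻¹)
    rw [hasGradientAt_iff_hasFDerivAt]
    refine hmul.congr_fderiv (Eq.symm ?_)
    rw [hGdef]
    simp [map_smul, map_sum]
  -- Lipschitz bound for G
  have hGlip : ∀ a b : EuclideanSpace ℝ (Fin d), ‖G a - G b‖ ≤ L * ‖a - b‖ := by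
    intro a b
    have hG' : G a - G b = (n:ℝ)⁻¹ • ∑ i, (gf i a - gf i b) := by
      rw [hGdef, ← smul_sub, ← Finset.sum_sub_distrib]
    rw [hG', norm_smul, Real.norm_eq_abs, abs_of_nonneg (by positivity : (0:ℝ) ≤ (n:ℝ)⁻¹)]
    calc (n:ℝ)⁻¹ * ‖∑ i, (gf i a - gf i b)‖
        ≤ (n:ℝ)⁻¹ * ∑ i, ‖gf i a - gf i b‖ := by
          gcongr
          exact norm_sum_le _ _
      _ ≤ (n:ℝ)⁻¹ * ∑ _i : Fin n, L * ‖a - b‖ := by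
          gcongr with i _
          exact hlip i a b
      _ = L * ‖a - b‖ := by
          rw [Finset.sum_const, Finset.card_univ, Fintype.card_fin, nsmul_eq_mul]
          field_simp
  -- β ≤ L
  have hβL : β ≤ L := by
    set e0 : EuclideanSpace ℝ (Fin d) := EuclideanSpace.single (⟨0, hd⟩ : Fin d) (1:ℝ) with he0
    have hne : ‖e0‖ = 1 := by rw [he0, EuclideanSpace.norm_single, norm_one]
    have hsm := strong_mono hGgrad hsc e0 0
    have hub : ⟪G e0 - G 0, e0 - 0⟫ ≤ L * 1 := by
      calc ⟪G e0 - G 0, e0 - 0⟫ ≤ ‖G e0 - G 0‖ * ‖e0 - 0‖ := real_inner_le_norm _ _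
        _ ≤ (L * ‖e0 - 0‖) * ‖e0 - 0‖ := by
            gcongr
            exact hGlip e0 0
        _ = L * 1 := by rw [sub_zero, hne]; ring
    have hcomb := le_trans hsm hub
    rw [sub_zero, hne] at hcomb
    norm_num at hcomb
    linarith
  -- gradient vanishes at the minimizer
  have hGw0 : G wstar = 0 := by
    have hmin' : IsLocalMin (fun z : EuclideanSpace ℝ (Fin d) => (n:ℝ)⁻¹ * ∑ i, f i z) wstar :=
      Filter.Eventually.of_forall hmin
    have h0 := hmin'.hasFDerivAt_eq_zero (hGgrad wstar).hasFDerivAt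
    apply (InnerProductSpace.toDual ℝ (EuclideanSpace ℝ (Fin d))).injective
    rw [h0, map_zero]
  -- z in terms of w and y
  have hzwy : ∀ s i, z s i = (y s i)⁻¹ • w s i := by
    intro s i
    cases s with
    | zero => rw [hz0, hy0]; simp
    | succ s => exact hzrec s i
  -- mulVec unfolding
  have hmv : ∀ (M : Matrix (Fin n) (Fin n) ℝ) (v : Fin n → ℝ) (i : Fin n),
      M.mulVec v i = ∑ j, M i j * v j := by
    intro M v i
    simp [Matrix.mulVec, dotProduct]
  -- sum of y is n
  have hysum : ∀ s, ∑ i, y s i = n := by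
    intro s
    induction s with
    | zero => rw [hy0]; simp
    | succ s ih =>
      rw [hyrec]
      calc ∑ i, W.mulVec (y s) i = ∑ i, ∑ j, W i j * y s j := by
            exact Finset.sum_congr rfl fun i _ => hmv W (y s) i
        _ = ∑ j, (∑ i, W i j) * y s j := by
            rw [Finset.sum_comm]
            exact Finset.sum_congr rfl fun j _ => (Finset.sum_mul _ _ _).symm
        _ = ∑ j, y s j := by
            exact Finset.sum_congr rfl fun j _ => by rw [hWcol j, one_mul]
        _ = n := ih
  -- σW nonneg
  set M : Matrix (Fin n) (Fin n) ℝ := W - Matrix.of (fun i _ => p i) with hMdef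
  have hMij : ∀ i j, M i j = W i j - p i := by
    intro i j
    rw [hMdef]
    simp [Matrix.sub_apply, Matrix.of_apply]
  have hσnn : 0 ≤ σW := by rw [hσW]; exact matNorm_nonneg _ _
  -- decay of y towards nπ
  have hyv : ∀ s, wnorm p (fun i => y s i - (n:ℝ) * p i) ≤ σW ^ s * Cw := by
    intro s
    induction s with
    | zero =>
      have hy0' : (fun i => y 0 i - (n:ℝ) * p i) = fun i => 1 - (n:ℝ) * p i := by
        funext i; rw [hy0]
      rw [hy0', pow_zero, one_mul, hCw]
    | succ s ih =>
      have hrec : (fun i => y (s+1) i - (n:ℝ) * p i)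
          = M.mulVec (fun i => y s i - (n:ℝ) * p i) := by
        funext i
        rw [hmv]
        have hWpi : ∑ j, W i j * p j = p i := by
          rw [← hmv W p i, hWp]
        have hyi : y (s+1) i = ∑ j, W i j * y s j := by
          rw [hyrec, hmv]
        have hterm : ∀ j : Fin n, M i j * (y s j - (n:ℝ) * p j)
            = W i j * y s j - (n:ℝ) * (W i j * p j) - p i * y s j + (n:ℝ) * p i * p j := by
          intro j
          rw [hMij]
          ring
        rw [Finset.sum_congr rfl fun j _ => hterm j]
        rw [Finset.sum_add_distrib, Finset.sum_sub_distrib, Finset.sum_sub_distrib,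
          ← Finset.mul_sum, ← Finset.mul_sum, ← Finset.mul_sum, hWpi, hysum s, hpsum, hyi]
        ring
      rw [hrec]
      calc wnorm p (M.mulVec (fun i => y s i - (n:ℝ) * p i))
          ≤ matNorm p M * wnorm p (fun i => y s i - (n:ℝ) * p i) :=
            wnorm_mulVec_le hppos _ _
        _ = σW * wnorm p (fun i => y s i - (n:ℝ) * p i) := by rw [hσW]
        _ ≤ σW * (σW ^ s * Cw) := by
            apply mul_le_mul_of_nonneg_left ih hσnn
        _ = σW ^ (s + 1) * Cw := by ring
  -- evolution of the average
  have hwbar_rec : wbar (t+1) = wbar t - (α * (n:ℝ)⁻¹) • ∑ j, gf j (z t j) := by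
    have hsumw : ∑ i, w (t+1) i = ∑ j, (w t j - α • gf j (z t j)) := by
      rw [hwrec]
      calc ∑ i, kron W (fun i => w t i - α • gf i (z t i)) i
          = ∑ i, ∑ j, W i j • (w t j - α • gf j (z t j)) := rfl
        _ = ∑ j, ∑ i, W i j • (w t j - α • gf j (z t j)) := by rw [Finset.sum_comm]
        _ = ∑ j, (∑ i, W i j) • (w t j - α • gf j (z t j)) := by
            exact Finset.sum_congr rfl fun j _ => (Finset.sum_smul).symm
        _ = ∑ j, (w t j - α • gf j (z t j)) := by
            exact Finset.sum_congr rfl fun j _ => by rw [hWcol j, one_smul]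
    rw [hwbar, hwbar, hsumw, Finset.sum_sub_distrib, ← Finset.smul_sum, smul_sub, smul_smul]
    module
  -- the decomposition of the error
  have hdecomp : wbar (t+1) - wstar
      = (wbar t - α • G (wbar t) - (wstar - α • G wstar))
        - (α * (n:ℝ)⁻¹) • ∑ j, (gf j (z t j) - gf j (wbar t)) := by
    rw [hGw0, smul_zero, sub_zero, hwbar_rec, hGdef]
    simp only [Finset.sum_sub_distrib, smul_sub, smul_smul]
    module
  -- contraction estimate
  have hcontr : ‖wbar t - α • G (wbar t) - (wstar - α • G wstar)‖
      ≤ (1 - β * L / (L + β) * α) * ‖wbar t - wstar‖ :=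
    contraction_step hβ hβL hα hα2 hGgrad hGlip hsc (wbar t) wstar
  -- δ bounds
  have hδub : ∀ s i, (y s i)⁻¹ ≤ δ := by
    intro s i
    exact hδ.1 ⟨(s, i), rfl⟩
  have hδnn : 0 ≤ δ := by
    have hi0 : (0:ℝ) < (y 0 ⟨0, Nat.pos_of_ne_zero hn0⟩)⁻¹ := by
      exact inv_pos.2 (hypos 0 _)
    linarith [hδub 0 ⟨0, Nat.pos_of_ne_zero hn0⟩]
  -- pointwise bound on consensus error
  have hzbound : ∀ j, ‖z t j - wbar t‖
      ≤ δ * (‖w t j - ((n:ℝ) * p j) • wbar t‖ + |y t j - (n:ℝ) * p j| * ‖wbar t‖) := by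
    intro j
    have hyj : y t j ≠ 0 := ne_of_gt (hypos t j)
    have hid : z t j - wbar t = (y t j)⁻¹ • (w t j - y t j • wbar t) := by
      rw [hzwy t j, smul_sub, smul_smul, inv_mul_cancel₀ hyj, one_smul]
    have hsplit : ‖w t j - y t j • wbar t‖
        ≤ ‖w t j - ((n:ℝ) * p j) • wbar t‖ + |y t j - (n:ℝ) * p j| * ‖wbar t‖ := by
      have hid2 : w t j - y t j • wbar t
          = (w t j - ((n:ℝ) * p j) • wbar t) + (((n:ℝ) * p j - y t j) • wbar t) := by
        rw [sub_smul]
        abel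
      rw [hid2]
      calc ‖(w t j - ((n:ℝ) * p j) • wbar t) + (((n:ℝ) * p j - y t j) • wbar t)‖
          ≤ ‖w t j - ((n:ℝ) * p j) • wbar t‖ + ‖((n:ℝ) * p j - y t j) • wbar t‖ :=
            norm_add_le _ _
        _ = ‖w t j - ((n:ℝ) * p j) • wbar t‖ + |y t j - (n:ℝ) * p j| * ‖wbar t‖ := by
            rw [norm_smul, Real.norm_eq_abs, abs_sub_comm]
    calc ‖z t j - wbar t‖ = (y t j)⁻¹ * ‖w t j - y t j • wbar t‖ := by
          rw [hid, norm_smul, Real.norm_eq_abs, abs_of_pos (inv_pos.2 (hypos t j))]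
      _ ≤ δ * ‖w t j - y t j • wbar t‖ :=
          mul_le_mul_of_nonneg_right (hδub t j) (norm_nonneg _)
      _ ≤ δ * (‖w t j - ((n:ℝ) * p j) • wbar t‖ + |y t j - (n:ℝ) * p j| * ‖wbar t‖) :=
          mul_le_mul_of_nonneg_left hsplit hδnn
  -- summed bounds
  have hsumB : ∑ j, ‖w t j - ((n:ℝ) * p j) • wbar t‖ ≤ B t := by
    rw [hB, bnorm]
    exact sum_le_sqrt_weighted p hppos hpsum _ (fun j => norm_nonneg _)
  have hsumY : ∑ j, |y t j - (n:ℝ) * p j| ≤ σW ^ t * Cw := by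
    have h1 : ∑ j, |y t j - (n:ℝ) * p j|
        ≤ Real.sqrt (∑ j, |y t j - (n:ℝ) * p j| ^ 2 / p j) :=
      sum_le_sqrt_weighted p hppos hpsum _ (fun j => abs_nonneg _)
    have h2 : Real.sqrt (∑ j, |y t j - (n:ℝ) * p j| ^ 2 / p j)
        = wnorm p (fun i => y t i - (n:ℝ) * p i) := by
      rw [wnorm]
      congr 1
      exact Finset.sum_congr rfl fun j _ => by rw [sq_abs]
    rw [h2] at h1
    exact le_trans h1 (hyv t)
  have hwbarn : ‖wbar t‖ ≤ A t + ‖wstar‖ := by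
    rw [hA]
    calc ‖wbar t‖ = ‖(wbar t - wstar) + wstar‖ := by rw [sub_add_cancel]
      _ ≤ ‖wbar t - wstar‖ + ‖wstar‖ := norm_add_le _ _
  -- total consensus bound
  have hconsensus : ∑ j, ‖z t j - wbar t‖
      ≤ δ * (B t + σW ^ t * Cw * (A t + ‖wstar‖)) := by
    have hAnn : 0 ≤ A t + ‖wstar‖ := by
      rw [hA]; positivity
    calc ∑ j, ‖z t j - wbar t‖
        ≤ ∑ j, δ * (‖w t j - ((n:ℝ) * p j) • wbar t‖ + |y t j - (n:ℝ) * p j| * ‖wbar t‖) :=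
          Finset.sum_le_sum fun j _ => hzbound j
      _ = δ * ((∑ j, ‖w t j - ((n:ℝ) * p j) • wbar t‖)
            + (∑ j, |y t j - (n:ℝ) * p j|) * ‖wbar t‖) := by
          rw [← Finset.mul_sum, Finset.sum_add_distrib, Finset.sum_mul]
      _ ≤ δ * (B t + (σW ^ t * Cw) * (A t + ‖wstar‖)) := by
          apply mul_le_mul_of_nonneg_left _ hδnn
          have h3 : (∑ j, |y t j - (n:ℝ) * p j|) * ‖wbar t‖
              ≤ (σW ^ t * Cw) * (A t + ‖wstar‖) := by
            apply mul_le_mul hsumY hwbarn (norm_nonneg _)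
            positivity
          linarith [hsumB, h3]
      _ = δ * (B t + σW ^ t * Cw * (A t + ‖wstar‖)) := by ring
  -- assemble everything
  have hmain : A (t+1) ≤ (1 - β * L / (L + β) * α) * A t
      + (α * (n:ℝ)⁻¹ * L) * (δ * (B t + σW ^ t * Cw * (A t + ‖wstar‖))) := by
    have hcoef : (0:ℝ) ≤ α * (n:ℝ)⁻¹ := by positivity
    calc A (t+1) = ‖wbar (t+1) - wstar‖ := hA (t+1)
      _ = ‖(wbar t - α • G (wbar t) - (wstar - α • G wstar))
            - (α * (n:ℝ)⁻¹) • ∑ j, (gf j (z t j) - gf j (wbar t))‖ := by rw [hdecomp]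
      _ ≤ ‖wbar t - α • G (wbar t) - (wstar - α • G wstar)‖
            + ‖(α * (n:ℝ)⁻¹) • ∑ j, (gf j (z t j) - gf j (wbar t))‖ := norm_sub_le _ _
      _ ≤ (1 - β * L / (L + β) * α) * ‖wbar t - wstar‖
            + (α * (n:ℝ)⁻¹) * ∑ j, ‖gf j (z t j) - gf j (wbar t)‖ := by
          apply add_le_add hcontr
          rw [norm_smul, Real.norm_eq_abs, abs_of_nonneg hcoef]
          exact mul_le_mul_of_nonneg_left (norm_sum_le _ _) hcoef
      _ ≤ (1 - β * L / (L + β) * α) * A t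
            + (α * (n:ℝ)⁻¹) * ∑ j, (L * ‖z t j - wbar t‖) := by
          rw [hA]
          apply add_le_add_right
          apply mul_le_mul_of_nonneg_left _ hcoef
          exact Finset.sum_le_sum fun j _ => hlip j (z t j) (wbar t)
      _ = (1 - β * L / (L + β) * α) * A t
            + (α * (n:ℝ)⁻¹ * L) * ∑ j, ‖z t j - wbar t‖ := by
          rw [← Finset.mul_sum]
          ring
      _ ≤ (1 - β * L / (L + β) * α) * A t
            + (α * (n:ℝ)⁻¹ * L) * (δ * (B t + σW ^ t * Cw * (A t + ‖wstar‖))) := by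
          apply add_le_add_right
          apply mul_le_mul_of_nonneg_left hconsensus
          positivity
  have hfinal : (1 - β * L / (L + β) * α) * A t
      + (α * (n:ℝ)⁻¹ * L) * (δ * (B t + σW ^ t * Cw * (A t + ‖wstar‖)))
      = (1 - β * L / (L + β) * α + α * L * δ / ↑n * Cw * σW ^ t) * A t
        + α * L * δ / ↑n * B t + α * L * δ / ↑n * Cw * σW ^ t * ‖wstar‖ := by
    field_simp
    ring
  linarith [hmain, hfinal.le, hfinal.ge]
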